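/- arXiv:1901.05263 — 3 statements merged into one kernel-verified Lean document; each statement's English description precedes it below -/
import Mathlib

section
/- Every smooth solution N : Ω → ℝ of the static KID system on the open half-space Ω = ℝ^{n-1} × (0,∞) is a linear combination of the n+1 functions V_(0)(w,z) = (|w|^2+z^2+1)/(2z), V_(n)(w,z) = (|w|^2+z^2−1)/(2z), and V_(k)(w,z) = w^k/z for 1 ≤ k ≤ n−1; that is, there exist real constants a_0, a_n, a_1, …, a_{n-1} such that N = a_0 V_(0) + a_n V_(n) + Σ_{k=1}^{n-1} a_k V_(k) on Ω. -/
/-- The open half-space `Ω = ℝ^k × (0,∞)`, points written `p = (w, z)` with `z = p.2 > 0`. -/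
def halfSpace (k : ℕ) : Set ((Fin k → ℝ) × ℝ) := {p | 0 < p.2}

/-- Partial derivative `∂_z F` with respect to the last coordinate `z`. -/
noncomputable def pdz {k : ℕ} (F : ((Fin k → ℝ) × ℝ) → ℝ) (p : (Fin k → ℝ) × ℝ) : ℝ :=
  fderiv ℝ F p (0, 1)

/-- Partial derivative `∂_i F` with respect to the coordinate `w^i`. -/
noncomputable def pdw {k : ℕ} (i : Fin k) (F : ((Fin k → ℝ) × ℝ) → ℝ)
    (p : (Fin k → ℝ) × ℝ) : ℝ :=
  fderiv ℝ F p (Pi.single i 1, 0)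

/-- The static KID system at a point `p = (w,z)`:
`∂_z² N + z⁻¹ ∂_z N − z⁻² N = 0`, `∂_z ∂_i N + z⁻¹ ∂_i N = 0`,
`∂_i ∂_j N − (z⁻¹ ∂_z N + z⁻² N) δ_ij = 0`. -/
def IsStaticKID {k : ℕ} (N : ((Fin k → ℝ) × ℝ) → ℝ) (p : (Fin k → ℝ) × ℝ) : Prop :=
  pdz (pdz N) p + p.2⁻¹ * pdz N p - (p.2 ^ 2)⁻¹ * N p = 0 ∧
  (∀ i : Fin k, pdz (pdw i N) p + p.2⁻¹ * pdw i N p = 0) ∧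
  (∀ i j : Fin k, pdw i (pdw j N) p
      - (p.2⁻¹ * pdz N p + (p.2 ^ 2)⁻¹ * N p) * (if i = j then 1 else 0) = 0)

/-! Put `G = z⁻¹ N + ∂_z N`. The first two KID equations, together with the symmetry of second
derivatives, say that `G` has vanishing gradient, so `G` is a constant `A` on the (convex)
half-space. The second and third equations then say that each `z ∂_i N − A wⁱ` has vanishing
gradient, hence equals a constant `bᵢ`; after that `z N − A (|w|² + z²)/2 − Σᵢ bᵢ wⁱ` has
vanishing gradient as well, which is the claimed formula for `N` multiplied by `z`. -/

section Calculus

variable {k : ℕ} {F : (Fin k → ℝ) × ℝ → ℝ} {p : (Fin k → ℝ) × ℝ}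

@[simp]
theorem fderiv_apply_zero_one : fderiv ℝ F p (0, 1) = pdz F p := rfl

@[simp]
theorem fderiv_apply_single_zero (i : Fin k) : fderiv ℝ F p (Pi.single i 1, 0) = pdw i F p := rfl

theorem fderiv_apply_eq_sum_pdw_add_pdz (v : (Fin k → ℝ) × ℝ) :
    fderiv ℝ F p v = ∑ i, v.1 i * pdw i F p + v.2 * pdz F p := by
  have hv : v = ∑ i, v.1 i • ((Pi.single i 1 : Fin k → ℝ), (0 : ℝ)) + v.2 • (0, 1) := by
    ext
    · simp [Prod.fst_sum, Finset.sum_apply, Pi.single_apply]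
    · simp [Prod.snd_sum]
  rw [congrArg (fderiv ℝ F p) hv]
  simp only [map_add, map_sum, map_smul, smul_eq_mul, fderiv_apply_zero_one,
    fderiv_apply_single_zero]

@[simp]
theorem pdz_snd : pdz (k := k) Prod.snd p = 1 := by simp [pdz, fderiv_snd]

@[simp]
theorem pdw_snd (i : Fin k) : pdw i Prod.snd p = 0 := by simp [pdw, fderiv_snd]

@[simp]
theorem pdz_fst_apply (i : Fin k) : pdz (fun q => q.1 i) p = 0 := by
  simp (disch := fun_prop) [pdz, fderiv_apply, fderiv_fst]

@[simp]
theorem pdw_fst_apply (i j : Fin k) : pdw j (fun q => q.1 i) p = if i = j then 1 else 0 := by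
  simp (disch := fun_prop) [pdw, fderiv_apply, fderiv_fst, Pi.single_apply]

theorem hasFDerivAt_snd_inv (hp : p.2 ≠ 0) :
    HasFDerivAt (fun q : (Fin k → ℝ) × ℝ => q.2⁻¹)
      ((-(p.2 ^ 2)⁻¹) • ContinuousLinearMap.snd ℝ (Fin k → ℝ) ℝ) p :=
  (hasDerivAt_inv hp).comp_hasFDerivAt p hasFDerivAt_snd

theorem pdz_snd_inv (hp : p.2 ≠ 0) : pdz (fun q => q.2⁻¹) p = -(p.2 ^ 2)⁻¹ := by
  simp [pdz, (hasFDerivAt_snd_inv hp).fderiv]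

theorem pdw_snd_inv (hp : p.2 ≠ 0) (i : Fin k) : pdw i (fun q => q.2⁻¹) p = 0 := by
  simp [pdw, (hasFDerivAt_snd_inv hp).fderiv]

theorem ContDiffAt.differentiableAt_pdz (hF : ContDiffAt ℝ 2 F p) :
    DifferentiableAt ℝ (pdz F) p :=
  ((hF.fderiv_right (m := 1) (by norm_num)).differentiableAt one_ne_zero).clm_apply
    (differentiableAt_const _)

theorem ContDiffAt.differentiableAt_pdw (hF : ContDiffAt ℝ 2 F p) (i : Fin k) :
    DifferentiableAt ℝ (pdw i F) p :=
  ((hF.fderiv_right (m := 1) (by norm_num)).differentiableAt one_ne_zero).clm_apply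
    (differentiableAt_const _)

theorem ContDiffAt.pdw_pdz_comm (hF : ContDiffAt ℝ 2 F p) (i : Fin k) :
    pdw i (pdz F) p = pdz (pdw i F) p := by
  have hF' := (hF.fderiv_right (m := 1) (by norm_num)).differentiableAt one_ne_zero
  change fderiv ℝ (fun q => fderiv ℝ F q (0, 1)) p (Pi.single i 1, 0)
    = fderiv ℝ (fun q => fderiv ℝ F q (Pi.single i 1, 0)) p (0, 1)
  rw [fderiv_clm_apply hF' (differentiableAt_const _),
    fderiv_clm_apply hF' (differentiableAt_const _)]
  simpa using (hF.isSymmSndFDerivAt (by simp)).eq (Pi.single i 1, 0) (0, 1)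

end Calculus

section HalfSpace

variable {k : ℕ}

theorem isOpen_halfSpace : IsOpen (halfSpace k) := isOpen_lt continuous_const continuous_snd

theorem convex_halfSpace : Convex ℝ (halfSpace k) :=
  convex_halfSpace_gt (LinearMap.snd ℝ _ ℝ).isLinear 0

theorem exists_eq_const_of_pdz_pdw_eq_zero {F : (Fin k → ℝ) × ℝ → ℝ}
    (hF : ∀ p ∈ halfSpace k, DifferentiableAt ℝ F p ∧ pdz F p = 0 ∧ ∀ i, pdw i F p = 0) :
    ∃ c, ∀ p ∈ halfSpace k, F p = c := by
  refine isOpen_halfSpace.exists_is_const_of_fderiv_eq_zero convex_halfSpace.isPreconnected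
    (fun p hp => (hF p hp).1.differentiableWithinAt)
    fun p hp => ContinuousLinearMap.ext fun v => ?_
  simp [fderiv_apply_eq_sum_pdw_add_pdz, (hF p hp).2.1, (hF p hp).2.2]

end HalfSpace

section StaticKID

variable {k : ℕ} {N : (Fin k → ℝ) × ℝ → ℝ}

theorem exists_inv_mul_add_pdz_eq (hN : ContDiffOn ℝ 2 N (halfSpace k))
    (hkid : ∀ p ∈ halfSpace k, IsStaticKID N p) :
    ∃ A, ∀ p ∈ halfSpace k, p.2⁻¹ * N p + pdz N p = A := by
  refine exists_eq_const_of_pdz_pdw_eq_zero fun p hp => ?_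
  have hNp := hN.contDiffAt (isOpen_halfSpace.mem_nhds hp)
  have := hNp.differentiableAt two_ne_zero
  have := hNp.differentiableAt_pdz
  have hp0 : p.2 ≠ 0 := hp.ne'
  refine ⟨by fun_prop, ?_, fun i => ?_⟩
  -- The `rw` unfolds only the outer partial derivative; `simp` folds the inner ones back.
  · rw [← fderiv_apply_zero_one]
    simp (disch := fun_prop) [fderiv_fun_add, fderiv_fun_mul, pdz_snd_inv hp0]
    linear_combination (hkid p hp).1
  · rw [← fderiv_apply_single_zero]
    simp (disch := fun_prop) [fderiv_fun_add, fderiv_fun_mul, pdw_snd_inv hp0,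
      hNp.pdw_pdz_comm]
    linear_combination (hkid p hp).2.1 i

theorem exists_snd_mul_pdw_sub_eq (hN : ContDiffOn ℝ 2 N (halfSpace k))
    (hkid : ∀ p ∈ halfSpace k, IsStaticKID N p) {A : ℝ}
    (hA : ∀ p ∈ halfSpace k, p.2⁻¹ * N p + pdz N p = A) (i : Fin k) :
    ∃ b, ∀ p ∈ halfSpace k, p.2 * pdw i N p - A * p.1 i = b := by
  refine exists_eq_const_of_pdz_pdw_eq_zero fun p hp => ?_
  have hNp := hN.contDiffAt (isOpen_halfSpace.mem_nhds hp)
  have := hNp.differentiableAt_pdw i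
  have hp0 : p.2 ≠ 0 := hp.ne'
  refine ⟨by fun_prop, ?_, fun j => ?_⟩
  · rw [← fderiv_apply_zero_one]
    simp (disch := fun_prop) [fderiv_fun_sub, fderiv_fun_mul]
    have h := (hkid p hp).2.1 i
    field_simp at h
    linear_combination h
  · rw [← fderiv_apply_single_zero]
    simp (disch := fun_prop) [fderiv_fun_sub, fderiv_fun_mul]
    have h := (hkid p hp).2.2 j i
    have hA' : p.2 * (p.2⁻¹ * pdz N p + (p.2 ^ 2)⁻¹ * N p) = A := by
      rw [← hA p hp]
      field_simp
      ring
    simp only [eq_comm (a := j)] at h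
    split_ifs at h ⊢
    · linear_combination p.2 * h + hA'
    · linear_combination p.2 * h

theorem exists_snd_mul_sub_eq (hN : DifferentiableOn ℝ N (halfSpace k)) {A : ℝ} {b : Fin k → ℝ}
    (hA : ∀ p ∈ halfSpace k, p.2⁻¹ * N p + pdz N p = A)
    (hb : ∀ i, ∀ p ∈ halfSpace k, p.2 * pdw i N p - A * p.1 i = b i) :
    ∃ c, ∀ p ∈ halfSpace k,
      p.2 * N p - (A / 2 * (∑ l, p.1 l ^ 2 + p.2 ^ 2) + ∑ l, b l * p.1 l) = c := by
  refine exists_eq_const_of_pdz_pdw_eq_zero fun p hp => ?_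
  have := hN.differentiableAt (isOpen_halfSpace.mem_nhds hp)
  have hp0 : p.2 ≠ 0 := hp.ne'
  refine ⟨by fun_prop, ?_, fun j => ?_⟩
  · rw [← fderiv_apply_zero_one]
    simp (disch := fun_prop) [fderiv_fun_sub, fderiv_fun_add, fderiv_fun_mul, fderiv_fun_sum,
      fderiv_fun_pow]
    have h := hA p hp
    field_simp at h
    linear_combination h
  · rw [← fderiv_apply_single_zero]
    simp (disch := fun_prop) [fderiv_fun_sub, fderiv_fun_add, fderiv_fun_mul, fderiv_fun_sum,
      fderiv_fun_pow]
    linear_combination hb j p hp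

end StaticKID

theorem staticKID_basis_general (n : ℕ) (N : ((Fin (n - 1) → ℝ) × ℝ) → ℝ)
    (hsmooth : ContDiffOn ℝ (⊤ : ℕ∞) N (halfSpace (n - 1)))
    (hkid : ∀ p ∈ halfSpace (n - 1), IsStaticKID N p) :
    ∃ (a₀ aₙ : ℝ) (a : Fin (n - 1) → ℝ), ∀ p ∈ halfSpace (n - 1),
      N p = a₀ * (((∑ i, p.1 i ^ 2) + p.2 ^ 2 + 1) / (2 * p.2))
          + aₙ * (((∑ i, p.1 i ^ 2) + p.2 ^ 2 - 1) / (2 * p.2))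
          + ∑ k, a k * (p.1 k / p.2) := by
  have hN : ContDiffOn ℝ 2 N (halfSpace (n - 1)) := hsmooth.of_le (WithTop.coe_le_coe.mpr le_top)
  obtain ⟨A, hA⟩ := exists_inv_mul_add_pdz_eq hN hkid
  choose b hb using exists_snd_mul_pdw_sub_eq hN hkid hA
  obtain ⟨c, hc⟩ := exists_snd_mul_sub_eq (hN.differentiableOn two_ne_zero) hA hb
  refine ⟨A / 2 + c, A / 2 - c, b, fun p hp => ?_⟩
  have hp0 : p.2 ≠ 0 := hp.ne'
  simp only [← mul_div_assoc, ← Finset.sum_div]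
  field_simp
  linear_combination 4 * hc p hp

/-- Every smooth solution of the static KID system on the half-space `Ω = ℝ^{n-1} × (0,∞)`
is a linear combination of `V₀(w,z) = (|w|²+z²+1)/(2z)`, `V_(n)(w,z) = (|w|²+z²−1)/(2z)`
and `V_(k)(w,z) = w^k/z`, `1 ≤ k ≤ n-1`. -/
theorem staticKID_basis (n : ℕ) (hn : 3 ≤ n) (N : ((Fin (n - 1) → ℝ) × ℝ) → ℝ)
    (hsmooth : ContDiffOn ℝ (⊤ : ℕ∞) N (halfSpace (n - 1)))
    (hkid : ∀ p ∈ halfSpace (n - 1), IsStaticKID N p) :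
    ∃ (a₀ aₙ : ℝ) (a : Fin (n - 1) → ℝ), ∀ p ∈ halfSpace (n - 1),
      N p = a₀ * (((∑ i, p.1 i ^ 2) + p.2 ^ 2 + 1) / (2 * p.2))
          + aₙ * (((∑ i, p.1 i ^ 2) + p.2 ^ 2 - 1) / (2 * p.2))
          + ∑ k, a k * (p.1 k / p.2) :=
  staticKID_basis_general n N hsmooth hkid
end

section
/- Let n ≥ 4 and let m = (m_0, m_1, 0, …, 0) ∈ ℝ^{n+1} satisfy m_0 < 0 and m_1 ≥ −m_0. Let ε_0 > 0 and let μ : (0, ε_0) → ℝ^{n+1} be a family of vectors such that ‖μ(ε) − m‖/ε^{n/2} → 0 as ε → 0^+ (Euclidean norm). For ε ∈ (0, π/2) set v_ε = cos ε. Then there exists ε_1 > 0 such that for all ε ∈ (0, ε_1), the vector Λ_{v_ε} μ(ε) + R Λ_{v_ε} μ(ε) is timelike past-pointing. -/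
open Matrix

/-- `γ_v = (1 − v²)^{-1/2}`. -/
noncomputable def lorGamma (v : ℝ) : ℝ := (Real.sqrt (1 - v ^ 2))⁻¹

/-- The Lorentz boost `Λ_v` in the first spatial direction, as an
`(n+1) × (n+1)` matrix (rows and columns indexed `0, …, n`). -/
noncomputable def boost (n : ℕ) (v : ℝ) : Matrix (Fin (n + 1)) (Fin (n + 1)) ℝ :=
  fun i j =>
    if i = 0 ∧ j = 0 then lorGamma v
    else if i = 1 ∧ j = 1 then lorGamma v
    else if (i = 0 ∧ j = 1) ∨ (i = 1 ∧ j = 0) then -(lorGamma v) * v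
    else if i = j then 1 else 0

/-- The reflection matrix `R = diag(1, −1, −1, 1, …, 1)`. -/
def reflMat (n : ℕ) : Matrix (Fin (n + 1)) (Fin (n + 1)) ℝ :=
  Matrix.diagonal fun i => if i = 1 ∨ i = 2 then -1 else 1

/-- The Minkowski metric matrix `η = diag(−1, 1, …, 1)`. -/
def minkMat (n : ℕ) : Matrix (Fin (n + 1)) (Fin (n + 1)) ℝ :=
  Matrix.diagonal fun i => if i = 0 then -1 else 1

/-- The Minkowski quadratic form `η(m) = −m₀² + Σ_{j=1}^n m_j²` on `ℝ^{n+1}`. -/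
def minkQ {N : ℕ} (m : Fin (N + 1) → ℝ) : ℝ :=
  ∑ j, if j = 0 then -(m j ^ 2) else m j ^ 2

/-- A vector of `ℝ^{n+1}` is timelike past-pointing if `η(m) < 0` and `m₀ < 0`. -/
def TimelikePast {N : ℕ} (m : Fin (N + 1) → ℝ) : Prop :=
  minkQ m < 0 ∧ m 0 < 0

/-- The Euclidean norm of a vector in `ℝ^{n+1}`. -/
noncomputable def euclNorm {N : ℕ} (u : Fin N → ℝ) : ℝ := Real.sqrt (∑ i, u i ^ 2)

lemma fin_val_one {n : ℕ} (hn : 4 ≤ n) : ((1 : Fin (n+1)) : ℕ) = 1 := by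
  show 1 % (n+1) = 1; exact Nat.mod_eq_of_lt (by omega)

lemma fin_val_two {n : ℕ} (hn : 4 ≤ n) : ((2 : Fin (n+1)) : ℕ) = 2 := by
  show 2 % (n+1) = 2; exact Nat.mod_eq_of_lt (by omega)

lemma fin_zero_ne_one {n : ℕ} (hn : 4 ≤ n) : (0 : Fin (n+1)) ≠ 1 := by
  apply Fin.ne_of_val_ne; rw [Fin.val_zero, fin_val_one hn]; omega

lemma fin_zero_ne_two {n : ℕ} (hn : 4 ≤ n) : (0 : Fin (n+1)) ≠ 2 := by
  apply Fin.ne_of_val_ne; rw [Fin.val_zero, fin_val_two hn]; omega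

lemma boost_mulVec_zero {n : ℕ} (hn : 4 ≤ n) (v : ℝ) (u : Fin (n+1) → ℝ) :
    (boost n v *ᵥ u) 0 = lorGamma v * u 0 + (-(lorGamma v) * v) * u 1 := by
  have h01 := fin_zero_ne_one hn
  show ∑ j, boost n v 0 j * u j = _
  have key : ∀ j : Fin (n+1), boost n v 0 j * u j =
      (if j = 0 then lorGamma v * u 0 else 0) +
      (if j = 1 then (-(lorGamma v) * v) * u 1 else 0) := by
    intro j
    by_cases hj0 : j = 0
    · subst hj0; simp [boost, h01, h01.symm]
    · by_cases hj1 : j = 1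
      · subst hj1; simp [boost, h01, h01.symm, hj0]
      · simp [boost, hj0, hj1, h01, (Ne.symm hj0)]
  rw [Finset.sum_congr rfl (fun j _ => key j), Finset.sum_add_distrib,
    Finset.sum_ite_eq', Finset.sum_ite_eq']
  simp

lemma boost_mulVec_high {n : ℕ} (hn : 4 ≤ n) (v : ℝ) (u : Fin (n+1) → ℝ)
    (i : Fin (n+1)) (hi : 2 ≤ (i : ℕ)) : (boost n v *ᵥ u) i = u i := by
  have hi0 : i ≠ 0 := by intro h; rw [h, Fin.val_zero] at hi; omega
  have hi1 : i ≠ 1 := by intro h; rw [h, fin_val_one hn] at hi; omega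
  show ∑ j, boost n v i j * u j = u i
  have key : ∀ j : Fin (n+1), boost n v i j * u j = if i = j then u i else 0 := by
    intro j
    by_cases h : i = j
    · subst h; simp [boost, hi0, hi1]
    · simp [boost, h, hi0, hi1]
  rw [Finset.sum_congr rfl (fun j _ => key j), Finset.sum_ite_eq]
  simp

set_option maxHeartbeats 1000000 in
/-- Let `n ≥ 4`, let `m = (m₀, m₁, 0, …, 0)` with `m₀ < 0`, `m₁ ≥ −m₀`, and let
`μ(ε)` be a family of vectors with `‖μ(ε) − m‖/ε^{n/2} → 0` as `ε → 0⁺`.  With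
`v_ε = cos ε`, for all sufficiently small `ε > 0` the vector
`Λ_{v_ε} μ(ε) + R Λ_{v_ε} μ(ε)` is timelike past-pointing. -/
theorem boosted_mass_timelike_past (n : ℕ) (hn : 4 ≤ n)
    (m : Fin (n + 1) → ℝ) (hm0 : m 0 < 0) (hm1 : -m 0 ≤ m 1)
    (hm : ∀ j : Fin (n + 1), 2 ≤ (j : ℕ) → m j = 0)
    (ε₀ : ℝ) (hε₀ : 0 < ε₀) (μ : ℝ → Fin (n + 1) → ℝ)
    (hμ : Filter.Tendsto (fun ε => euclNorm (μ ε - m) / ε ^ ((n : ℝ) / 2))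
      (nhdsWithin 0 (Set.Ioo 0 ε₀)) (nhds 0)) :
    ∃ ε₁ > 0, ε₁ ≤ min ε₀ (Real.pi / 2) ∧ ∀ ε ∈ Set.Ioo (0 : ℝ) ε₁,
      TimelikePast
        (boost n (Real.cos ε) *ᵥ μ ε + reflMat n *ᵥ (boost n (Real.cos ε) *ᵥ μ ε)) := by
  have hm1pos : 0 < m 1 := lt_of_lt_of_le (by linarith) hm1
  set c : ℝ := (m 1 - m 0) / 2 with hc_def
  have hc : 0 < c := by rw [hc_def]; linarith
  -- the Euclidean norm of the error tends to 0
  have hpow : Filter.Tendsto (fun ε : ℝ => ε ^ ((n : ℝ) / 2))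
      (nhdsWithin 0 (Set.Ioo 0 ε₀)) (nhds 0) := by
    have h : Filter.Tendsto (fun x : ℝ => x ^ ((n : ℝ) / 2))
        (nhdsWithin 0 (Set.Ioo 0 ε₀)) (nhds ((0:ℝ) ^ ((n : ℝ) / 2))) :=
      ((Real.continuousAt_rpow_const 0 _ (Or.inr (by positivity))).tendsto).mono_left
        nhdsWithin_le_nhds
    rwa [Real.zero_rpow (by positivity : (0:ℝ) < (n:ℝ)/2).ne'] at h
  have hN : Filter.Tendsto (fun ε => euclNorm (μ ε - m))
      (nhdsWithin 0 (Set.Ioo 0 ε₀)) (nhds 0) := by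
    have h := hμ.mul hpow
    rw [zero_mul] at h
    refine Filter.Tendsto.congr' ?_ h
    filter_upwards [self_mem_nhdsWithin] with ε hε
    exact div_mul_cancel₀ _ (Real.rpow_pos_of_pos hε.1 _).ne'
  have hcos : Filter.Tendsto (fun ε : ℝ => (1 - Real.cos ε) * m 1)
      (nhdsWithin 0 (Set.Ioo 0 ε₀)) (nhds 0) := by
    have h : Filter.Tendsto (fun ε : ℝ => (1 - Real.cos ε) * m 1)
        (nhdsWithin 0 (Set.Ioo 0 ε₀)) (nhds ((1 - Real.cos 0) * m 1)) :=
      (ContinuousAt.tendsto (by fun_prop)).mono_left nhdsWithin_le_nhds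
    simpa using h
  have hP : ∀ᶠ ε in nhdsWithin 0 (Set.Ioo 0 ε₀),
      (1 - Real.cos ε) * m 1 + 2 * euclNorm (μ ε - m) < c ∧ euclNorm (μ ε - m) < c := by
    have h1 := hcos.add (hN.const_mul 2)
    norm_num at h1
    exact (h1.eventually_lt_const hc).and (hN.eventually_lt_const hc)
  rw [nhdsWithin_Ioo_eq_nhdsGT hε₀, Filter.eventually_iff,
    mem_nhdsGT_iff_exists_Ioo_subset] at hP
  obtain ⟨u1, hu1, hsub⟩ := hP
  have hπ : 0 < Real.pi / 2 := by positivity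
  refine ⟨min u1 (min ε₀ (Real.pi / 2)), lt_min hu1 (lt_min hε₀ hπ), min_le_right _ _, ?_⟩
  rintro ε ⟨hε0, hεlt⟩
  have hεu1 : ε < u1 := lt_of_lt_of_le hεlt (min_le_left _ _)
  have hεπ : ε < Real.pi / 2 := lt_of_lt_of_le hεlt ((min_le_right _ _).trans (min_le_right _ _))
  obtain ⟨hP1, hP2⟩ := hsub ⟨hε0, hεu1⟩
  set v := Real.cos ε with hv_def
  set g := lorGamma v with hg_def
  set w := boost n v *ᵥ μ ε with hw_def
  set N := euclNorm (μ ε - m) with hN_def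
  set s := ∑ j, ((μ ε - m) j) ^ 2 with hs_def
  clear_value v g w N s
  clear_value c
  have hs_nonneg : 0 ≤ s := by
    rw [hs_def]; exact Finset.sum_nonneg fun j _ => sq_nonneg _
  have hNs : N ^ 2 = s := by
    rw [hN_def, hs_def]; simp only [euclNorm]
    exact Real.sq_sqrt (Finset.sum_nonneg fun j _ => sq_nonneg _)
  have hN0 : 0 ≤ N := by
    rw [hN_def]; simp only [euclNorm]; exact Real.sqrt_nonneg _
  have habs : ∀ j : Fin (n+1), |(μ ε - m) j| ≤ N := by
    intro j
    have h1 : ((μ ε - m) j) ^ 2 ≤ s := by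
      rw [hs_def]
      exact Finset.single_le_sum (fun i _ => sq_nonneg ((μ ε - m) i)) (Finset.mem_univ j)
    calc |(μ ε - m) j| = Real.sqrt (((μ ε - m) j) ^ 2) := (Real.sqrt_sq_eq_abs _).symm
      _ ≤ Real.sqrt s := Real.sqrt_le_sqrt h1
      _ = N := by rw [hN_def, hs_def]; simp only [euclNorm]
  have hsin : 0 < Real.sin ε :=
    Real.sin_pos_of_pos_of_lt_pi hε0 (by linarith [Real.pi_pos])
  have hg : g = (Real.sin ε)⁻¹ := by
    rw [hg_def, lorGamma, show 1 - v ^ 2 = Real.sin ε ^ 2 by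
      have := Real.sin_sq_add_cos_sq ε; rw [hv_def]; linarith,
      Real.sqrt_sq hsin.le]
  have hgpos : 0 < g := by rw [hg]; exact inv_pos.2 hsin
  have hginv : g * Real.sin ε = 1 := by rw [hg]; field_simp
  have hg1 : 1 ≤ g := by
    nlinarith [mul_nonneg (sub_nonneg.2 (Real.sin_le_one ε)) hgpos.le]
  have hw0 : w 0 = g * (μ ε 0) + (-g * v) * (μ ε 1) := by
    rw [hw_def, hg_def]; exact boost_mulVec_zero hn v (μ ε)
  have hvle : v ≤ 1 := by rw [hv_def]; exact Real.cos_le_one ε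
  have hvge : -1 ≤ v := by rw [hv_def]; exact Real.neg_one_le_cos ε
  have hd0 := abs_le.1 (habs 0)
  have hd1 := abs_le.1 (habs 1)
  simp only [Pi.sub_apply] at hd0 hd1
  have hA : μ ε 0 - v * μ ε 1 < -c := by
    nlinarith [mul_nonneg (by linarith : (0:ℝ) ≤ 1 - v)
        (by linarith [hd1.2] : (0:ℝ) ≤ N - (μ ε 1 - m 1)),
      mul_nonneg (by linarith : (0:ℝ) ≤ 1 + v)
        (by linarith [hd1.1] : (0:ℝ) ≤ N + (μ ε 1 - m 1))]
  have hW : w 0 < -c := by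
    rw [hw0, show g * (μ ε 0) + (-g * v) * (μ ε 1) = g * (μ ε 0 - v * μ ε 1) by ring]
    nlinarith [mul_nonneg (by linarith : (0:ℝ) ≤ g - 1)
      (by linarith : (0:ℝ) ≤ -(μ ε 0 - v * μ ε 1))]
  -- component formulas for the vector x = w + R w
  have h1ne : (0 : Fin (n+1)) ≠ 1 := fin_zero_ne_one hn
  have h2ne : (0 : Fin (n+1)) ≠ 2 := fin_zero_ne_two hn
  have hxr : ∀ j : Fin (n+1), (w + reflMat n *ᵥ w) j =
      w j + (if j = 1 ∨ j = 2 then (-1:ℝ) else 1) * w j := by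
    intro j; rw [Pi.add_apply, reflMat, Matrix.mulVec_diagonal]
  have hx0 : (w + reflMat n *ᵥ w) 0 = 2 * w 0 := by
    rw [hxr 0, if_neg (by simp [h1ne, h2ne])]; ring
  have hx1 : (w + reflMat n *ᵥ w) 1 = 0 := by
    rw [hxr 1, if_pos (Or.inl rfl)]; ring
  have hx2 : (w + reflMat n *ᵥ w) 2 = 0 := by
    rw [hxr 2, if_pos (Or.inr rfl)]; ring
  have hxhigh : ∀ j : Fin (n+1), j ≠ 0 → j ≠ 1 → j ≠ 2 →
      (w + reflMat n *ᵥ w) j = 2 * (μ ε - m) j := by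
    intro j hj0 hj1 hj2
    have hv0 : (j : ℕ) ≠ 0 := fun h => hj0 (Fin.ext (by rw [h, Fin.val_zero]))
    have hv1 : (j : ℕ) ≠ 1 := fun h => hj1 (Fin.ext (by rw [h, fin_val_one hn]))
    have hjval : 2 ≤ (j : ℕ) := by omega
    rw [hxr j, if_neg (by tauto), one_mul, hw_def, boost_mulVec_high hn v (μ ε) j hjval,
      Pi.sub_apply, hm j hjval]
    ring
  have hw0sq : c ^ 2 < w 0 ^ 2 := by nlinarith
  have hslt : s < c ^ 2 := by nlinarith
  constructor
  · -- minkQ < 0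
    have key : ∀ j : Fin (n+1),
        (if j = 0 then -((w + reflMat n *ᵥ w) j ^ 2) else (w + reflMat n *ᵥ w) j ^ 2) ≤
        (if j = 0 then -((w + reflMat n *ᵥ w) 0 ^ 2) else 0) + 4 * ((μ ε - m) j) ^ 2 := by
      intro j
      by_cases hj0 : j = 0
      · subst hj0; rw [if_pos rfl, if_pos rfl]
        linarith [sq_nonneg ((μ ε - m) (0 : Fin (n+1)))]
      · rw [if_neg hj0, if_neg hj0, zero_add]
        by_cases hj1 : j = 1
        · subst hj1; rw [hx1]; nlinarith [sq_nonneg ((μ ε - m) (1 : Fin (n+1)))]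
        · by_cases hj2 : j = 2
          · subst hj2; rw [hx2]; nlinarith [sq_nonneg ((μ ε - m) (2 : Fin (n+1)))]
          · rw [hxhigh j hj0 hj1 hj2]; nlinarith [sq_nonneg ((μ ε - m) j)]
    have hsum : minkQ (w + reflMat n *ᵥ w) ≤ -((w + reflMat n *ᵥ w) 0 ^ 2) + 4 * s := by
      calc minkQ (w + reflMat n *ᵥ w)
          ≤ ∑ j : Fin (n+1), ((if j = 0 then -((w + reflMat n *ᵥ w) 0 ^ 2) else 0)
              + 4 * ((μ ε - m) j) ^ 2) := Finset.sum_le_sum fun j _ => key j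
        _ = -((w + reflMat n *ᵥ w) 0 ^ 2) + 4 * s := by
            rw [Finset.sum_add_distrib, Finset.sum_ite_eq', ← Finset.mul_sum, hs_def]
            simp
    have := hsum
    rw [hx0] at this
    nlinarith
  · rw [hx0]; linarith
end

section
/- For every R > 0 there exist a radius R' > R + 1, a constant C ∈ ℝ, and a smooth function f : ℝ^n → ℝ such that: f(x) = −√(1 + ‖x‖^2) for all x with ‖x‖ ≤ R + 1; f(x) = C for all x with ‖x‖ ≥ R'; and ‖∇f(x)‖ < 1 for all x ∈ ℝ^n (so that the graph {(f(x), x) : x ∈ ℝ^n} is a spacelike hypersurface in (n+1)-dimensional Minkowski space-time which coincides with the lower unit hyperboloid for ‖x‖ ≤ R+1 and with a horizontal hyperplane near infinity). -/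
/-!
Take `f = G ∘ ρ` with `ρ x = √(1 + ‖x‖²)` and `G = flattenNeg a` a primitive of `-χ`, where
`χ` is a smooth cutoff equal to `1` below `a = ρ(R + 1)` and to `0` above `a + 1`. Then
`G v = -v` for `v ≤ a`, `G` is constant for `v ≥ a + 1`, and
`‖∇f x‖ = |G' (ρ x)| · ‖x‖ / ρ x < 1` because `|G'| ≤ 1` and `‖x‖ < ρ x`.
-/

open Real intervalIntegral

noncomputable def flattenNeg (a v : ℝ) : ℝ := -a - ∫ t in a..v, smoothTransition (a + 1 - t)

theorem continuous_smoothTransition_sub (b : ℝ) : Continuous fun t => smoothTransition (b - t) :=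
  smoothTransition.continuous.comp (continuous_sub_left b)

theorem hasDerivAt_flattenNeg (a v : ℝ) :
    HasDerivAt (flattenNeg a) (-smoothTransition (a + 1 - v)) v :=
  ((continuous_smoothTransition_sub (a + 1)).integral_hasStrictDerivAt a v).hasDerivAt.const_sub _

theorem contDiff_flattenNeg (a : ℝ) {k : ℕ∞} : ContDiff ℝ k (flattenNeg a) := by
  refine ContDiff.of_le ?_ (WithTop.coe_le_coe.2 le_top)
  rw [contDiff_infty_iff_deriv]
  refine ⟨fun v => (hasDerivAt_flattenNeg a v).differentiableAt, ?_⟩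
  rw [funext fun v => (hasDerivAt_flattenNeg a v).deriv]
  exact (smoothTransition.contDiff.comp (contDiff_const.sub contDiff_id)).neg

theorem flattenNeg_of_le {a v : ℝ} (h : v ≤ a) : flattenNeg a v = -v := by
  have hone : ∫ t in a..v, smoothTransition (a + 1 - t) = ∫ _ in a..v, (1 : ℝ) :=
    integral_congr fun t ht => by
      rw [Set.uIcc_of_ge h] at ht
      exact smoothTransition.one_of_one_le (by linarith [ht.2])
  rw [flattenNeg, hone, integral_const, smul_eq_mul, mul_one]
  ring

theorem flattenNeg_of_ge {a v : ℝ} (h : a + 1 ≤ v) : flattenNeg a v = flattenNeg a (a + 1) := by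
  have hint (u w : ℝ) :
      IntervalIntegrable (fun t => smoothTransition (a + 1 - t)) MeasureTheory.volume u w :=
    (continuous_smoothTransition_sub (a + 1)).intervalIntegrable u w
  have hzero : ∫ t in (a + 1)..v, smoothTransition (a + 1 - t) = 0 := by
    rw [← integral_zero]
    exact integral_congr fun t ht => by
      rw [Set.uIcc_of_le h] at ht
      exact smoothTransition.zero_of_nonpos (by linarith [ht.1])
  rw [flattenNeg, flattenNeg, ← integral_add_adjacent_intervals (hint a (a + 1)) (hint (a + 1) v),
    hzero, add_zero]

theorem norm_lt_sqrt_one_add_norm_sq {E : Type*} [SeminormedAddCommGroup E] (x : E) :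
    ‖x‖ < √(1 + ‖x‖ ^ 2) :=
  lt_sqrt_of_sq_lt (by linarith)

section JapaneseBracket

variable {E : Type*} [NormedAddCommGroup E] [InnerProductSpace ℝ E]

theorem contDiff_sqrt_one_add_norm_sq {k : ℕ∞} : ContDiff ℝ k fun x : E => √(1 + ‖x‖ ^ 2) :=
  (contDiff_const.add (contDiff_norm_sq ℝ)).sqrt fun x => by positivity

theorem hasFDerivAt_sqrt_one_add_norm_sq (x : E) :
    HasFDerivAt (fun y : E => √(1 + ‖y‖ ^ 2)) ((√(1 + ‖x‖ ^ 2))⁻¹ • innerSL ℝ x) x := by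
  have := ((hasStrictFDerivAt_norm_sq x).hasFDerivAt.const_add 1).sqrt (by positivity)
  convert this using 1
  ext y
  simp only [smul_apply, coe_innerSL_apply, smul_eq_mul, one_div, mul_inv_rev, nsmul_eq_mul,
    Nat.cast_ofNat]
  ring

theorem norm_fderiv_comp_sqrt_one_add_norm_sq_lt_one {g : ℝ → ℝ} {g' : ℝ} (x : E)
    (hg : HasDerivAt g g' √(1 + ‖x‖ ^ 2)) (hg' : |g'| ≤ 1) :
    ‖fderiv ℝ (fun y => g √(1 + ‖y‖ ^ 2)) x‖ < 1 := by
  have hρ : 0 < √(1 + ‖x‖ ^ 2) := sqrt_pos.2 (by positivity)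
  change ‖fderiv ℝ (g ∘ fun y => √(1 + ‖y‖ ^ 2)) x‖ < 1
  rw [(hg.comp_hasFDerivAt x (hasFDerivAt_sqrt_one_add_norm_sq x)).fderiv, norm_smul, norm_smul,
    innerSL_apply_norm, norm_inv, norm_of_nonneg hρ.le, Real.norm_eq_abs]
  calc |g'| * ((√(1 + ‖x‖ ^ 2))⁻¹ * ‖x‖) ≤ 1 * ((√(1 + ‖x‖ ^ 2))⁻¹ * ‖x‖) := by gcongr
    _ < 1 := by
      rw [one_mul, inv_mul_lt_iff₀ hρ, mul_one]
      exact norm_lt_sqrt_one_add_norm_sq x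

end JapaneseBracket

theorem spacelike_interpolation_general (n : ℕ) (R : ℝ) :
    ∃ (R' C : ℝ) (f : EuclideanSpace ℝ (Fin n) → ℝ),
      R + 1 < R' ∧
      ContDiff ℝ (⊤ : ℕ∞) f ∧
      (∀ x : EuclideanSpace ℝ (Fin n), ‖x‖ ≤ R + 1 → f x = -Real.sqrt (1 + ‖x‖ ^ 2)) ∧
      (∀ x : EuclideanSpace ℝ (Fin n), R' ≤ ‖x‖ → f x = C) ∧
      (∀ x : EuclideanSpace ℝ (Fin n), ‖gradient f x‖ < 1) := by
  set a := √(1 + (R + 1) ^ 2)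
  have hRa : R + 1 < a := lt_sqrt_of_sq_lt (by linarith)
  refine ⟨a + 1, flattenNeg a (a + 1), fun x => flattenNeg a √(1 + ‖x‖ ^ 2), by linarith,
    (contDiff_flattenNeg a).comp contDiff_sqrt_one_add_norm_sq, fun x hx => ?_,
    fun x hx => flattenNeg_of_ge (hx.trans (norm_lt_sqrt_one_add_norm_sq x).le), fun x => ?_⟩
  · exact flattenNeg_of_le (sqrt_le_sqrt (by gcongr))
  · rw [gradient, LinearIsometryEquiv.norm_map]
    refine norm_fderiv_comp_sqrt_one_add_norm_sq_lt_one x (hasDerivAt_flattenNeg a _) ?_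
    rw [abs_neg, abs_of_nonneg (smoothTransition.nonneg _)]
    exact smoothTransition.le_one _

/-- For every `R > 0` there are `R' > R + 1`, a constant `C` and a smooth function
`f : ℝⁿ → ℝ` with `f(x) = −√(1 + ‖x‖²)` for `‖x‖ ≤ R + 1`, `f ≡ C` for `‖x‖ ≥ R'`,
and `‖∇f‖ < 1` everywhere — so the graph of `f` is a spacelike hypersurface in
Minkowski space-time coinciding with the lower unit hyperboloid for `‖x‖ ≤ R + 1`
and with a horizontal hyperplane near infinity. -/
theorem spacelike_interpolation (n : ℕ) (hn : 3 ≤ n) (R : ℝ) (hR : 0 < R) :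
    ∃ (R' C : ℝ) (f : EuclideanSpace ℝ (Fin n) → ℝ),
      R + 1 < R' ∧
      ContDiff ℝ (⊤ : ℕ∞) f ∧
      (∀ x : EuclideanSpace ℝ (Fin n), ‖x‖ ≤ R + 1 → f x = -Real.sqrt (1 + ‖x‖ ^ 2)) ∧
      (∀ x : EuclideanSpace ℝ (Fin n), R' ≤ ‖x‖ → f x = C) ∧
      (∀ x : EuclideanSpace ℝ (Fin n), ‖gradient f x‖ < 1) :=
  spacelike_interpolation_general n R
end
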